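/- Let P be a prime graph with n vertices and let k be a positive integer. Then the number of simple graphs on the fixed vertex set {1,2,…,n^k} that are isomorphic to the k-fold box product P^{□k} equals (n^k)! / (k! · |Aut(P)|^k). -/

import Mathlib

open SimpleGraph

/-- The box (Cartesian) product of a finite family of simple graphs. -/
def boxProdFamily {k : ℕ} {W : Fin k → Type} (P : ∀ i, SimpleGraph (W i)) :
    SimpleGraph (∀ i, W i) where
  Adj u v := ∃ j, (P j).Adj (u j) (v j) ∧ ∀ i, i ≠ j → u i = v i
  symm := ⟨fun _ _ ⟨j, hadj, h⟩ => ⟨j, hadj.symm, fun i hi => (h i hi).symm⟩⟩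
  loopless := ⟨fun _ ⟨j, hadj, _⟩ => (P j).loopless.irrefl _ hadj⟩

/-- The `k`-fold box product `P □ P □ ⋯ □ P` of a simple graph `P`. -/
def boxProdPow {V : Type} (P : SimpleGraph V) (k : ℕ) : SimpleGraph (Fin k → V) :=
  boxProdFamily fun _ : Fin k => P

/-- A finite simple graph is prime with respect to the box product. -/
def SimpleGraph.IsPrime {V : Type} [Fintype V] (G : SimpleGraph V) : Prop :=
  G.Connected ∧ 2 ≤ Fintype.card V ∧
    ∀ (V₁ V₂ : Type) [Fintype V₁] [Fintype V₂]
      (H₁ : SimpleGraph V₁) (H₂ : SimpleGraph V₂),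
      Nonempty (G ≃g H₁.boxProd H₂) →
      Fintype.card V₁ = 1 ∨ Fintype.card V₂ = 1

/-!
Counting labelings: the graphs on `Fin (n ^ k)` isomorphic to `G := P^{□k}`, each paired with one
of the `|Aut G|` isomorphisms to `G`, are exactly the bijections `Fin (n ^ k) ≃ V(G)`. So it
suffices to show `|Aut G| = k! · |Aut P| ^ k`, i.e. that every automorphism permutes the
coordinates and then applies an automorphism of `P` in each of them.

Distance in `G` is the sum of the coordinate distances, so an automorphism `φ` maps a layer
`{v[i ↦ a] | a}` onto a geodesically convex set. Such a set is the product of its projection to a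
coordinate `j` and its projection to the other coordinates; by primality of `P` one factor is
trivial, so `φ` maps every `i`-layer into some `j`-layer. Opposite sides of a square of
single-coordinate changes change the same coordinate, hence `j` depends only on `i`.
-/

open SimpleGraph Function Finset

section

variable {ι α β κ : Type*} [DecidableEq ι]

theorem update_induction {Q : (ι → α) → Prop} (t : Finset ι)
    (hQ : ∀ x, Q x → ∀ i ∈ t, ∀ a, Q (update x i a)) {x y : ι → α} (hx : Q x)
    (hxy : ∀ i ∉ t, x i = y i) : Q y := by
  induction t using Finset.induction_on generalizing x with
  | empty => exact funext (fun i => hxy i (notMem_empty i)) ▸ hx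
  | insert i t hi ih =>
    refine ih (fun z hz j hj => hQ z hz j (mem_insert_of_mem hj))
      (hQ x hx i (mem_insert_self i t) (y i)) fun j hj => ?_
    obtain rfl | hji := eq_or_ne j i
    · exact update_self ..
    · rw [update_of_ne hji]
      exact hxy j (by simp [hji, hj])

theorem coord_eq_of_square {p q r s : ι → α} {c₁ c₂ c₃ c₄ : ι}
    (h₁ : ∀ z, z ≠ c₁ → p z = q z) (h₂ : ∀ z, z ≠ c₂ → q z = r z)
    (h₃ : ∀ z, z ≠ c₃ → r z = s z) (h₄ : ∀ z, z ≠ c₄ → s z = p z)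
    (hpq : p ≠ q) (hrs : r ≠ s) (hpr : p ≠ r) (hqs : q ≠ s) :
    c₁ = c₃ := by
  have hpq₁ : p c₁ ≠ q c₁ := fun h => hpq (funext fun z => by by_cases z = c₁ <;> grind)
  have hrs₃ : r c₃ ≠ s c₃ := fun h => hrs (funext fun z => by by_cases z = c₃ <;> grind)
  by_contra h
  -- a coordinate changed along one side has to be changed back along another one
  have hc₁ : c₁ = c₂ ∨ c₁ = c₄ := by grind
  have hc₃ : c₃ = c₂ ∨ c₃ = c₄ := by grind
  rcases hc₁ with rfl | rfl
  · exact hpr (funext fun z => by by_cases z = c₁ <;> grind)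
  · exact hqs (funext fun z => by by_cases z = c₁ <;> grind)

/-- `f` sends the `i`-layer `{v[i ↦ a] | a}` through `v` into the `j`-layer through `f v`. -/
def MapsLayerTo (f : (ι → α) → κ → β) (v : ι → α) (i : ι) (j : κ) : Prop :=
  ∀ a l, l ≠ j → f (update v i a) l = f v l

theorem apply_eq_of_forall_mapsLayerTo [Fintype ι] {f : (ι → α) → κ → β} {σ : ι → κ}
    (hf : ∀ x i, MapsLayerTo f x i (σ i)) {x y : ι → α} {m : κ}
    (hxy : ∀ i, σ i = m → x i = y i) : f x m = f y m := by
  classical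
  exact update_induction (Q := fun z => f x m = f z m) {i | σ i ≠ m}
      (fun z hz i hi a => hz.trans (hf z i a m (by simpa [eq_comm] using hi)).symm) rfl
      fun i hi => hxy i (by simpa using hi)

end

theorem SimpleGraph.Iso.dist_eq {V W : Type*} {G : SimpleGraph V} {G' : SimpleGraph W}
    (φ : G ≃g G') (u v : V) : G'.dist (φ u) (φ v) = G.dist u v := by
  simp only [dist_eq_sInf]
  congr 1
  ext n
  constructor
  · rintro ⟨p, rfl⟩
    exact ⟨(p.map φ.symm.toHom).copy (φ.symm_apply_apply u) (φ.symm_apply_apply v), by simp⟩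
  · rintro ⟨p, rfl⟩
    exact ⟨p.map φ.toHom, by simp⟩

theorem SimpleGraph.IsPrime.nontrivial {V : Type} [Fintype V] {P : SimpleGraph V}
    (hP : P.IsPrime) : Nontrivial V :=
  Fintype.one_lt_card_iff_nontrivial.mp hP.2.1

theorem SimpleGraph.IsPrime.forall_fst_eq_or_forall_snd_eq {V α β : Type} [Fintype V]
    {P : SimpleGraph V} (hP : P.IsPrime) {A : SimpleGraph α} {B : SimpleGraph β}
    (e : P ↪g A □ B) (he : ∀ a b, ∃ c, e c = ((e a).1, (e b).2)) :
    (∀ a b, (e a).1 = (e b).1) ∨ (∀ a b, (e a).2 = (e b).2) := by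
  classical
  let S := Set.range fun a => (e a).1
  let T := Set.range fun a => (e a).2
  let f : V → S × T := fun a => (⟨(e a).1, a, rfl⟩, ⟨(e a).2, a, rfl⟩)
  have hf : Bijective f := by
    refine ⟨fun a b h => e.injective (Prod.ext ?_ ?_), ?_⟩
    · exact congrArg (fun p => (p.1 : α)) h
    · exact congrArg (fun p => (p.2 : β)) h
    · rintro ⟨⟨_, a, rfl⟩, ⟨_, b, rfl⟩⟩
      obtain ⟨c, hc⟩ := he a b
      exact ⟨c, by simp [f, hc]⟩
  let θ : P ≃g A.induce S □ B.induce T :=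
    { toEquiv := Equiv.ofBijective f hf
      map_rel_iff' := fun {a b} => by
        simpa [f, boxProd_adj, Subtype.ext_iff] using e.map_adj_iff (v := a) (w := b) }
  have : Fintype S := Fintype.ofFinite S
  have : Fintype T := Fintype.ofFinite T
  rcases hP.2.2 S T _ _ ⟨θ⟩ with h | h
  · have := Fintype.card_le_one_iff_subsingleton.mp h.le
    exact .inl fun a b =>
      congrArg Subtype.val (Subsingleton.elim (⟨_, a, rfl⟩ : S) ⟨_, b, rfl⟩)
  · have := Fintype.card_le_one_iff_subsingleton.mp h.le
    exact .inr fun a b =>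
      congrArg Subtype.val (Subsingleton.elim (⟨_, a, rfl⟩ : T) ⟨_, b, rfl⟩)

namespace boxProdPow

variable {V : Type} {P : SimpleGraph V} {k : ℕ}

theorem adj_iff {x y : Fin k → V} :
    (boxProdPow P k).Adj x y ↔ ∃ j, P.Adj (x j) (y j) ∧ ∀ i, i ≠ j → x i = y i :=
  Iff.rfl

theorem adj_update_update {v : Fin k → V} {i : Fin k} {a b : V} :
    (boxProdPow P k).Adj (update v i a) (update v i b) ↔ P.Adj a b := by
  refine ⟨fun ⟨j, hj, _⟩ => ?_,
    fun h => ⟨i, by simpa using h, fun l hl => by simp [hl]⟩⟩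
  obtain rfl | hji := eq_or_ne j i
  · simpa using hj
  · simp [hji] at hj

theorem adj_iff_update (j : Fin k) (c : V) {x y : Fin k → V} :
    (boxProdPow P k).Adj x y ↔
      P.Adj (x j) (y j) ∧ update x j c = update y j c ∨
        (boxProdPow P k).Adj (update x j c) (update y j c) ∧ x j = y j := by
  constructor
  · rintro ⟨l, hl, hxy⟩
    obtain rfl | hlj := eq_or_ne l j
    · exact .inl ⟨hl, funext fun i => by by_cases hi : i = l <;> simp [hi, hxy]⟩
    · refine .inr ⟨⟨l, by simpa [hlj] using hl, fun i hi => ?_⟩, hxy j hlj.symm⟩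
      by_cases hij : i = j <;> simp [hij, hxy i hi]
  · rintro (⟨hj, hxy⟩ | ⟨⟨l, hl, hxy⟩, hj⟩)
    · exact ⟨j, hj, fun i hi => by simpa [hi] using congrFun hxy i⟩
    · obtain rfl | hlj := eq_or_ne l j
      · simp at hl
      refine ⟨l, by simpa [hlj] using hl, fun i hi => ?_⟩
      obtain rfl | hij := eq_or_ne i j
      · exact hj
      · simpa [hij] using hxy i hi

def layer (v : Fin k → V) (i : Fin k) : P ↪g boxProdPow P k where
  toFun := update v i
  inj' := update_injective v i
  map_rel_iff' := adj_update_update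

@[simp]
theorem layer_apply (v : Fin k → V) (i : Fin k) (a : V) :
    layer (P := P) v i a = update v i a :=
  rfl

/-- Realises `P^{□k} ≅ P □ P^{□(k-1)}` without changing vertex types: the second component is
`x` with its `j`-th coordinate frozen to `c`. -/
def splitAt (j : Fin k) (c : V) : boxProdPow P k ↪g P □ boxProdPow P k where
  toFun x := (x j, update x j c)
  inj' x y h := by
    simp only [Prod.mk.injEq] at h
    have hx := congrArg (update · j (x j)) h.2
    simp only [update_idem, update_eq_self] at hx
    rw [hx, h.1, update_eq_self]
  map_rel_iff' := by
    intro x y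
    simp only [boxProd_adj]
    exact (adj_iff_update j c).symm

@[simp]
theorem splitAt_apply (j : Fin k) (c : V) (x : Fin k → V) :
    splitAt (P := P) j c x = (x j, update x j c) :=
  rfl

theorem exists_walk_length_le (hP : P.Connected) (t : Finset (Fin k)) {x y : Fin k → V}
    (hxy : ∀ i ∉ t, x i = y i) :
    ∃ w : (boxProdPow P k).Walk x y, w.length ≤ ∑ i ∈ t, P.dist (x i) (y i) := by
  induction t using Finset.induction_on generalizing x with
  | empty => exact ⟨(Walk.nil).copy rfl (funext fun i => hxy i (notMem_empty i)), by simp⟩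
  | insert i t hi ih =>
    obtain ⟨p, hp⟩ := hP.exists_walk_length_eq_dist (x i) (y i)
    let w₁ : (boxProdPow P k).Walk x (update x i (y i)) :=
      (p.map (layer x i).toHom).copy (update_eq_self i x) rfl
    obtain ⟨w₂, hw₂⟩ := ih (x := update x i (y i)) fun j hj => by
      obtain rfl | hji := eq_or_ne j i
      · simp
      · simpa [hji] using hxy j (by simp [hji, hj])
    refine ⟨w₁.append w₂, ?_⟩
    have hsum : ∑ j ∈ t, P.dist (update x i (y i) j) (y j) = ∑ j ∈ t, P.dist (x j) (y j) :=
      sum_congr rfl fun j hj => by rw [update_of_ne (ne_of_mem_of_not_mem hj hi)]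
    have hw₁ : w₁.length = P.dist (x i) (y i) :=
      ((Walk.length_copy _ _ _).trans (Walk.length_map _ _)).trans hp
    rw [Walk.length_append, hw₁, sum_insert hi]
    omega

theorem sum_dist_le_length (hP : P.Connected) {x y : Fin k → V}
    (w : (boxProdPow P k).Walk x y) : ∑ i, P.dist (x i) (y i) ≤ w.length := by
  induction w with
  | nil => simp
  | @cons x x' y h w ih =>
    obtain ⟨j, hj, hxx'⟩ := adj_iff.mp h
    have hstep : ∑ i, P.dist (x i) (x' i) = 1 := by
      rw [sum_eq_single j (fun i _ hi => by rw [hxx' i hi, dist_self]) (by simp),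
        dist_eq_one_iff_adj.mpr hj]
    calc ∑ i, P.dist (x i) (y i)
        ≤ ∑ i, (P.dist (x i) (x' i) + P.dist (x' i) (y i)) :=
          sum_le_sum fun i _ => hP.dist_triangle
      _ ≤ w.length + 1 := by rw [sum_add_distrib, hstep]; omega
      _ = _ := by simp

theorem dist_eq_sum (hP : P.Connected) (x y : Fin k → V) :
    (boxProdPow P k).dist x y = ∑ i, P.dist (x i) (y i) := by
  obtain ⟨w, hw⟩ := exists_walk_length_le hP univ (x := x) (y := y) (by simp)
  obtain ⟨w', hw'⟩ := (Walk.reachable w).exists_walk_length_eq_dist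
  exact le_antisymm ((dist_le w).trans hw) (hw' ▸ sum_dist_le_length hP w')

theorem apply_eq_of_dist_add_dist_eq (hP : P.Connected) {x y z : Fin k → V}
    (h : (boxProdPow P k).dist x z + (boxProdPow P k).dist z y = (boxProdPow P k).dist x y)
    {i : Fin k} (hi : x i = y i) : z i = x i := by
  simp only [dist_eq_sum hP, ← sum_add_distrib] at h
  have := (sum_eq_sum_iff_of_le fun j _ => hP.dist_triangle).mp h.symm i (mem_univ i)
  rw [← hi, dist_self] at this
  exact ((hP.dist_eq_zero_iff.mp (by omega : P.dist (x i) (z i) = 0)).symm)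

theorem dist_add_dist_update (hP : P.Connected) (x y : Fin k → V) (j : Fin k) :
    (boxProdPow P k).dist x (update x j (y j)) + (boxProdPow P k).dist (update x j (y j)) y =
      (boxProdPow P k).dist x y := by
  simp only [dist_eq_sum hP, ← sum_add_distrib]
  refine sum_congr rfl fun i _ => ?_
  obtain rfl | hij := eq_or_ne i j <;> simp [*]

theorem exists_apply_update_eq (hP : P.Connected) (φ : boxProdPow P k ≃g boxProdPow P k)
    (v : Fin k → V) (i j : Fin k) (a b : V) :
    ∃ c, φ (update v i c) = update (φ (update v i b)) j (φ (update v i a) j) := by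
  set m := update (φ (update v i b)) j (φ (update v i a) j)
  -- `m` lies on a geodesic between two points of the image of a layer, so `φ.symm m` lies on a
  -- geodesic inside the layer itself.
  have hm : (boxProdPow P k).dist (φ (update v i b)) m +
      (boxProdPow P k).dist m (φ (update v i a)) =
        (boxProdPow P k).dist (φ (update v i b)) (φ (update v i a)) :=
    dist_add_dist_update hP _ _ j
  rw [← φ.apply_symm_apply m, φ.dist_eq, φ.dist_eq, φ.dist_eq] at hm
  refine ⟨φ.symm m i, ?_⟩
  suffices update v i (φ.symm m i) = φ.symm m by rw [this, φ.apply_symm_apply]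
  refine funext fun l => ?_
  obtain rfl | hl := eq_or_ne l i
  · simp
  · rw [update_of_ne hl, apply_eq_of_dist_add_dist_eq hP hm (by simp [hl]), update_of_ne hl]

theorem exists_mapsLayerTo [Fintype V] (hP : P.IsPrime)
    (φ : boxProdPow P k ≃g boxProdPow P k) (v : Fin k → V) (i : Fin k) :
    ∃ j, MapsLayerTo φ v i j := by
  by_contra! h
  have hconst : ∀ j a b, φ (update v i a) j = φ (update v i b) j := by
    intro j
    let e := (layer v i).trans (φ.toEmbedding.trans (splitAt j (v j)))
    have he : ∀ a b, ∃ c, e c = ((e a).1, (e b).2) := fun a b => by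
      obtain ⟨c, hc⟩ := exists_apply_update_eq hP.1 φ v i j a b
      exact ⟨c, by simp [e, hc]⟩
    refine (hP.forall_fst_eq_or_forall_snd_eq e he).resolve_right
      fun h' => h j fun a l hl => ?_
    simpa [e, hl] using congrFun (h' a (v i)) l
  have := hP.nontrivial
  obtain ⟨a, b, hab⟩ := exists_pair_ne V
  exact hab (update_injective v i (φ.injective (funext fun j => hconst j a b)))

theorem mapsLayerTo_update [Fintype V] (hP : P.IsPrime)
    (φ : boxProdPow P k ≃g boxProdPow P k) {v : Fin k → V} {i j : Fin k}
    (h : MapsLayerTo φ v i j) (l : Fin k) (b : V) :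
    MapsLayerTo φ (update v l b) i j := by
  obtain rfl | hli := eq_or_ne l i
  · intro a m hm
    rw [update_idem, h a m hm, h b m hm]
  obtain rfl | hb := eq_or_ne b (v l)
  · rwa [update_eq_self]
  have := hP.nontrivial
  obtain ⟨a, ha⟩ := exists_ne (v i)
  obtain ⟨j', hj'⟩ := exists_mapsLayerTo hP φ (update v l b) i
  obtain ⟨c₂, hc₂⟩ := exists_mapsLayerTo hP φ (update v i a) l
  obtain ⟨c₄, hc₄⟩ := exists_mapsLayerTo hP φ v l
  -- the images of `v`, `v[i ↦ a]`, `v[i ↦ a, l ↦ b]`, `v[l ↦ b]` form a square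
  suffices j = j' from this ▸ hj'
  refine coord_eq_of_square (c₂ := c₂) (fun z hz => (h a z hz).symm) (fun z hz => ?_) (hj' a)
    (hc₄ b) (φ.injective.ne ?_) (φ.injective.ne ?_) (φ.injective.ne ?_) (φ.injective.ne ?_)
  · rw [update_comm hli]
    exact (hc₂ b z hz).symm
  · exact fun h => ha (by simpa using (congrFun h i).symm)
  · exact fun h => ha (by simpa [hli.symm] using congrFun h i)
  · exact fun h => hb (by simpa [hli] using (congrFun h l).symm)
  · exact fun h => ha (by simpa [hli.symm] using congrFun h i)

theorem mapsLayerTo_of_mapsLayerTo [Fintype V] (hP : P.IsPrime)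
    (φ : boxProdPow P k ≃g boxProdPow P k) {v : Fin k → V} {i j : Fin k}
    (h : MapsLayerTo φ v i j) (w : Fin k → V) : MapsLayerTo φ w i j :=
  update_induction (Q := (MapsLayerTo φ · i j)) univ
    (fun _ hx l _ b => mapsLayerTo_update hP φ hx l b) h (by simp)

theorem exists_perm_apply_eq [Fintype V] (hP : P.IsPrime)
    (φ : boxProdPow P k ≃g boxProdPow P k) :
    ∃ σ : Equiv.Perm (Fin k), ∀ x m, φ x m = φ (fun _ => x (σ.symm m)) m := by
  have := hP.nontrivial
  let v₀ : Fin k → V := fun _ => Classical.arbitrary V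
  choose τ hτ using exists_mapsLayerTo hP φ v₀
  have hτ' : ∀ x i, MapsLayerTo φ x i (τ i) :=
    fun x i => mapsLayerTo_of_mapsLayerTo hP φ (hτ i) x
  have hsurj : Surjective τ := by
    intro m
    by_contra! hm
    obtain ⟨b, hb⟩ := exists_ne (φ v₀ m)
    obtain ⟨y, hy⟩ := φ.surjective (update (φ v₀) m b)
    have := apply_eq_of_forall_mapsLayerTo hτ' (x := y) (y := v₀) (m := m)
      fun i hi => (hm i hi).elim
    exact hb (by simpa [hy] using this)
  let σ := Equiv.ofBijective τ ⟨Finite.injective_iff_surjective.mpr hsurj, hsurj⟩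
  refine ⟨σ, fun x m => apply_eq_of_forall_mapsLayerTo hτ' fun i hi => ?_⟩
  rw [← hi]
  exact congrArg x (Equiv.ofBijective_symm_apply_apply τ _ i).symm

def wreath (σ : Equiv.Perm (Fin k)) (α : Fin k → P ≃g P) :
    boxProdPow P k ≃g boxProdPow P k where
  toEquiv :=
    (Equiv.arrowCongr σ (Equiv.refl V)).trans (Equiv.piCongrRight fun m => (α m).toEquiv)
  map_rel_iff' := by
    intro x y
    change (∃ j, P.Adj (α j (x (σ.symm j))) (α j (y (σ.symm j))) ∧
      ∀ i, i ≠ j → α i (x (σ.symm i)) = α i (y (σ.symm i))) ↔ _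
    simp only [Iso.map_adj_iff, (α _).injective.eq_iff]
    constructor
    · rintro ⟨j, hj, hxy⟩
      exact ⟨σ.symm j, hj, fun i hi => by simpa using hxy (σ i) (by rintro rfl; simp at hi)⟩
    · rintro ⟨j, hj, hxy⟩
      exact ⟨σ j, by simpa using hj, fun i hi => hxy _ (by rintro rfl; simp at hi)⟩

@[simp]
theorem wreath_apply (σ : Equiv.Perm (Fin k)) (α : Fin k → P ≃g P) (x : Fin k → V)
    (m : Fin k) :
    wreath σ α x m = α m (x (σ.symm m)) :=
  rfl

theorem exists_iso_apply_eq [Finite V] [Nonempty V] (φ : boxProdPow P k ≃g boxProdPow P k)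
    (σ : Equiv.Perm (Fin k)) (hφ : ∀ x m, φ x m = φ (fun _ => x (σ.symm m)) m)
    (m : Fin k) : ∃ α : P ≃g P, ∀ b, α b = φ (fun _ => b) m := by
  let v : Fin k → V := fun _ => Classical.arbitrary V
  let g b := φ (fun _ => b) m
  have hlayer : ∀ b, φ (update v (σ.symm m) b) = update (φ v) m (g b) := fun b => by
    refine funext fun m' => ?_
    rw [hφ _ m']
    obtain rfl | hm' := eq_or_ne m' m
    · simp [g]
    · simp [hm', σ.symm.injective.ne hm', ← hφ v m']
  have hg : Injective g := fun b b' h =>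
    update_injective v (σ.symm m) (φ.injective (by rw [hlayer, hlayer, h]))
  refine ⟨⟨Equiv.ofBijective g (Finite.injective_iff_bijective.mp hg), fun {b b'} => ?_⟩,
    fun _ => rfl⟩
  change P.Adj (g b) (g b') ↔ P.Adj b b'
  rw [← adj_update_update (v := φ v) (i := m), ← hlayer, ← hlayer, φ.map_adj_iff,
    adj_update_update]

theorem wreath_surjective [Fintype V] (hP : P.IsPrime) :
    Surjective fun p : Equiv.Perm (Fin k) × (Fin k → P ≃g P) => wreath p.1 p.2 := by
  intro φ
  obtain ⟨σ, hσ⟩ := exists_perm_apply_eq hP φ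
  have : Nonempty V := hP.1.nonempty
  choose α hα using exists_iso_apply_eq φ σ hσ
  exact ⟨(σ, α), RelIso.ext fun x => funext fun m => by simp [hα, ← hσ]⟩

theorem wreath_injective [Nontrivial V] :
    Injective fun p : Equiv.Perm (Fin k) × (Fin k → P ≃g P) => wreath p.1 p.2 := by
  rintro ⟨σ, α⟩ ⟨σ', α'⟩ h
  have happ : ∀ (x : Fin k → V) m, α m (x (σ.symm m)) = α' m (x (σ'.symm m)) :=
    fun x m => congrFun (DFunLike.congr_fun h x) m
  obtain rfl : α = α' := funext fun m => RelIso.ext fun b => happ (fun _ => b) m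
  have hσ : σ.symm = σ'.symm := Equiv.ext fun m => by
    by_contra hne
    obtain ⟨a, b, hab⟩ := exists_pair_ne V
    have := (α m).injective (happ (update (fun _ => a) (σ.symm m) b) m)
    simp [Ne.symm hne] at this
    exact hab this.symm
  rw [Equiv.symm_bijective.injective hσ]

theorem card_iso_self [Fintype V] (hP : P.IsPrime) :
    Nat.card (boxProdPow P k ≃g boxProdPow P k) = k.factorial * Nat.card (P ≃g P) ^ k := by
  have := hP.nontrivial
  rw [← Nat.card_congr (Equiv.ofBijective _ ⟨wreath_injective, wreath_surjective hP⟩),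
    Nat.card_prod, Nat.card_perm, Nat.card_fun, Nat.card_fin]

end boxProdPow

theorem card_iso_subtype_mul_card_iso_self {α W : Type*} (G : SimpleGraph W) :
    Nat.card {H : SimpleGraph α // Nonempty (H ≃g G)} * Nat.card (G ≃g G) =
      Nat.card (α ≃ W) := by
  let f : (α ≃ W) → {H : SimpleGraph α // Nonempty (H ≃g G)} :=
    fun e => ⟨G.comap e, ⟨Iso.comap e G⟩⟩
  let fiber (H : {H : SimpleGraph α // Nonempty (H ≃g G)}) : {e // f e = H} ≃ (H.1 ≃g G) :=
    { toFun e := ⟨e.1, fun {a b} => by rw [← congrArg Subtype.val e.2]; rfl⟩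
      invFun i := ⟨i.toEquiv, Subtype.ext <| SimpleGraph.ext <| funext₂ fun a b =>
        propext i.map_adj_iff⟩
      left_inv _ := rfl
      right_inv _ := rfl }
  let torsor (H : {H : SimpleGraph α // Nonempty (H ≃g G)}) : (H.1 ≃g G) ≃ (G ≃g G) :=
    { toFun i := H.2.some.symm.trans i
      invFun j := H.2.some.trans j
      left_inv i := RelIso.ext fun a => by simp
      right_inv j := RelIso.ext fun a => by simp }
  rw [← Nat.card_prod]
  exact Nat.card_congr ((Equiv.sigmaFiberEquiv f).symm.trans
    (Equiv.sigmaEquivProdOfEquiv fun H => (fiber H).trans (torsor H))).symm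

theorem card_labeled_copies_boxProdPow_general {V : Type} [Fintype V] (P : SimpleGraph V)
    (n : ℕ) (hn : Fintype.card V = n) (hP : P.IsPrime) (k : ℕ) :
    Nat.card {H : SimpleGraph (Fin (n ^ k)) // Nonempty (H ≃g boxProdPow P k)} =
      (n ^ k).factorial / (k.factorial * Nat.card (P ≃g P) ^ k) := by
  classical
  have hcount := card_iso_subtype_mul_card_iso_self (α := Fin (n ^ k)) (boxProdPow P k)
  rw [boxProdPow.card_iso_self hP, Nat.card_eq_fintype_card (α := Fin (n ^ k) ≃ _),
    Fintype.card_equiv (Fintype.equivOfCardEq (by simp [hn])), Fintype.card_fin] at hcount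
  exact Nat.eq_div_of_mul_eq_left (right_ne_zero_of_mul (hcount ▸ (n ^ k).factorial_ne_zero))
    hcount

/-- Let `P` be a prime graph on `n` vertices and `k ≥ 1`. The number of simple
graphs on the fixed vertex set `{1, …, n^k}` isomorphic to the `k`-fold box
product `P^{□k}` equals `(n^k)! / (k! ⬝ |Aut(P)|^k)`. -/
theorem card_labeled_copies_boxProdPow {V : Type} [Fintype V] (P : SimpleGraph V)
    (n : ℕ) (hn : Fintype.card V = n) (hP : P.IsPrime) (k : ℕ) (hk : 0 < k) :
    Nat.card {H : SimpleGraph (Fin (n ^ k)) // Nonempty (H ≃g boxProdPow P k)} =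
      (n ^ k).factorial / (k.factorial * Nat.card (P ≃g P) ^ k) :=
  card_labeled_copies_boxProdPow_general P n hn hP k
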